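/- Let p ∈ [1,∞] and let f ∈ L^p(ℝ) be a measurable function such that for some real numbers a < b one has f(x) ≤ 0 for almost every x ∈ [a,b] and f(x) ≥ 0 for almost every x ∉ [a,b]. Define F(x) = ∫_ℝ K(x−y) f(y) dy. Then F(b) ≥ F(a); moreover F(b) = F(a) holds only when f(x) = 0 for almost every x ∈ ℝ. -/

import Mathlib

/-! With `g y = K(b - y) - K(a - y)` we have `F(b) - F(a) = ∫ g f`. On `[a, b]` the points
`b - y ≥ 0 ≥ a - y` are not both `0` and `K` has the opposite sign of its argument, so `g < 0`;
off `[a, b]` they lie on the same side of `0`, where `K` is strictly increasing, so `g > 0`.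
Hence `g f ≥ 0` a.e., and as `g` never vanishes, `∫ g f = 0` forces `f = 0` a.e. The integrals
converge by Hölder's inequality, `K` being integrable and bounded by `1/2`. -/

open MeasureTheory Real
open scoped ENNReal NNReal

/-- The kernel `K(x) = -sgn(x) e^{-|x|}/2`, the derivative of the Green's function
`G₂(x) = e^{-|x|}/2` of `1 - d²/dx²` on `ℝ`. -/
noncomputable def bbmK (x : ℝ) : ℝ := -Real.sign x * Real.exp (-|x|) / 2

open Set

lemma Real.measurable_sign : Measurable Real.sign :=
  Measurable.ite (measurableSet_lt measurable_id measurable_const) measurable_const <|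
    Measurable.ite (measurableSet_lt measurable_const measurable_id) measurable_const
      measurable_const

lemma Real.abs_sign_le_one (x : ℝ) : |Real.sign x| ≤ 1 := by
  rcases Real.sign_apply_eq x with h | h | h <;> simp [h]

lemma integrable_exp_neg_abs : Integrable fun x : ℝ => exp (-|x|) :=
  .of_integral_ne_zero <| by
    rw [integral_comp_abs (f := fun x => exp (-x)), integral_exp_neg_Ioi_zero]
    norm_num

lemma MeasureTheory.Integrable.memLp_of_norm_le_one {α : Type*} [MeasurableSpace α]
    {μ : Measure α} {f : α → ℝ} {q : ℝ≥0∞} (hf : Integrable f μ) (hbound : ∀ᵐ x ∂μ, ‖f x‖ ≤ 1)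
    (hq : 1 ≤ q) : MemLp f q μ := by
  rcases eq_or_ne q ∞ with rfl | hq_top
  · exact memLp_top_of_bound hf.1 1 hbound
  have hq_pos : q ≠ 0 := (zero_lt_one.trans_le hq).ne'
  have hq_one : 1 ≤ q.toReal := by simpa using ENNReal.toReal_mono hq_top hq
  rw [← integrable_norm_rpow_iff hf.1 hq_pos hq_top]
  refine hf.norm.mono'
    (hf.aestronglyMeasurable.norm.aemeasurable.pow_const _).aestronglyMeasurable ?_
  filter_upwards [hbound] with x hx
  rw [norm_of_nonneg (by positivity)]
  simpa using Real.rpow_le_rpow_of_exponent_ge' (norm_nonneg _) hx zero_le_one hq_one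

lemma bbmK_zero : bbmK 0 = 0 := by simp [bbmK]

lemma bbmK_of_pos {x : ℝ} (hx : 0 < x) : bbmK x = -exp (-x) / 2 := by
  simp [bbmK, Real.sign_of_pos hx, abs_of_pos hx]

lemma bbmK_of_neg {x : ℝ} (hx : x < 0) : bbmK x = exp x / 2 := by
  simp [bbmK, Real.sign_of_neg hx, abs_of_neg hx]

lemma bbmK_neg_of_pos {x : ℝ} (hx : 0 < x) : bbmK x < 0 := by
  rw [bbmK_of_pos hx]; have := exp_pos (-x); linarith

lemma bbmK_pos_of_neg {x : ℝ} (hx : x < 0) : 0 < bbmK x := by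
  rw [bbmK_of_neg hx]; positivity

lemma bbmK_nonneg_of_nonpos {x : ℝ} (hx : x ≤ 0) : 0 ≤ bbmK x := by
  rcases hx.eq_or_lt with rfl | hx
  · rw [bbmK_zero]
  · exact (bbmK_pos_of_neg hx).le

lemma strictMonoOn_bbmK_Ioi : StrictMonoOn bbmK (Ioi 0) := fun x hx y hy hxy => by
  rw [bbmK_of_pos hx, bbmK_of_pos hy]
  have := exp_lt_exp.mpr (neg_lt_neg hxy)
  linarith

lemma strictMonoOn_bbmK_Iio : StrictMonoOn bbmK (Iio 0) := fun x hx y hy hxy => by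
  rw [bbmK_of_neg hx, bbmK_of_neg hy]
  have := exp_lt_exp.mpr hxy
  linarith

lemma abs_bbmK_le (x : ℝ) : |bbmK x| ≤ exp (-|x|) / 2 := by
  rw [bbmK, abs_div, abs_mul, abs_neg, abs_of_pos (exp_pos _), abs_two]
  gcongr
  exact mul_le_of_le_one_left (exp_pos _).le (Real.abs_sign_le_one x)

lemma measurable_bbmK : Measurable bbmK :=
  (Real.measurable_sign.neg.mul (continuous_exp.comp continuous_abs.neg).measurable).div_const _

lemma integrable_bbmK : Integrable bbmK :=
  (integrable_exp_neg_abs.div_const 2).mono' measurable_bbmK.aestronglyMeasurable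
    (ae_of_all _ abs_bbmK_le)

lemma memLp_bbmK_sub (x : ℝ) {q : ℝ≥0∞} (hq : 1 ≤ q) : MemLp (fun y => bbmK (x - y)) q := by
  refine (integrable_bbmK.comp_sub_left x).memLp_of_norm_le_one (ae_of_all _ fun y => ?_) hq
  calc ‖bbmK (x - y)‖ ≤ exp (-|x - y|) / 2 := abs_bbmK_le _
    _ ≤ 1 := by linarith [exp_le_one_iff.mpr (neg_nonpos.mpr (abs_nonneg (x - y)))]

lemma integrable_bbmK_sub_mul {p : ℝ≥0∞} (hp : 1 ≤ p) {f : ℝ → ℝ} (hf : MemLp f p) (x : ℝ) :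
    Integrable fun y => bbmK (x - y) * f y :=
  have : Fact (1 ≤ p) := ⟨hp⟩
  (memLp_bbmK_sub x (ENNReal.HolderConjugate.conjExponent hp).symm.one_le).integrable_mul hf

lemma bbmK_sub_lt_of_mem_Icc {a b y : ℝ} (hab : a < b) (hy : y ∈ Icc a b) :
    bbmK (b - y) < bbmK (a - y) := by
  rcases hy.2.lt_or_eq with hyb | rfl
  · linarith [bbmK_neg_of_pos (sub_pos.mpr hyb), bbmK_nonneg_of_nonpos (sub_nonpos.mpr hy.1)]
  · simpa [bbmK_zero] using bbmK_pos_of_neg (sub_neg.mpr hab)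

lemma bbmK_sub_lt_of_notMem_Icc {a b y : ℝ} (hab : a < b) (hy : y ∉ Icc a b) :
    bbmK (a - y) < bbmK (b - y) := by
  rcases not_and_or.mp hy with hay | hyb
  · have hya := not_le.mp hay
    exact strictMonoOn_bbmK_Ioi (sub_pos.mpr hya) (sub_pos.mpr (hya.trans hab)) (by linarith)
  · have hby := not_le.mp hyb
    exact strictMonoOn_bbmK_Iio (sub_neg.mpr (hab.trans hby)) (sub_neg.mpr hby) (by linarith)

lemma ae_eq_zero_of_integral_mul_eq_zero {α : Type*} [MeasurableSpace α] {μ : Measure α}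
    {g f : α → ℝ} (hgf : 0 ≤ᵐ[μ] fun x => g x * f x) (hint : Integrable (fun x => g x * f x) μ)
    (hg : ∀ᵐ x ∂μ, g x ≠ 0) (h : ∫ x, g x * f x ∂μ = 0) : f =ᵐ[μ] 0 := by
  filter_upwards [(integral_eq_zero_iff_of_nonneg_ae hgf hint).mp h, hg] with x hx hgx
  exact (mul_eq_zero.mp hx).resolve_left hgx

/-- If `f ∈ L^p(ℝ)`, `f ≤ 0` a.e. on `[a,b]` and `f ≥ 0` a.e. outside `[a,b]`, then
`F(x) = ∫ K(x-y) f(y) dy` satisfies `F(b) ≥ F(a)`, with equality only if `f = 0` a.e. -/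
theorem bbm_key_lemma_line (p : ℝ≥0∞) (hp : 1 ≤ p) (f : ℝ → ℝ)
    (hf : MemLp f p (volume : Measure ℝ))
    (a b : ℝ) (hab : a < b)
    (hneg : ∀ᵐ x : ℝ, x ∈ Set.Icc a b → f x ≤ 0)
    (hpos : ∀ᵐ x : ℝ, x ∉ Set.Icc a b → 0 ≤ f x) :
    (∫ y : ℝ, bbmK (a - y) * f y) ≤ (∫ y : ℝ, bbmK (b - y) * f y) ∧
    ((∫ y : ℝ, bbmK (b - y) * f y) = (∫ y : ℝ, bbmK (a - y) * f y) →
      ∀ᵐ x : ℝ, f x = 0) := by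
  set g : ℝ → ℝ := fun y => bbmK (b - y) - bbmK (a - y)
  have hint : Integrable fun y => g y * f y := by
    simp_rw [g, sub_mul]
    exact (integrable_bbmK_sub_mul hp hf b).sub (integrable_bbmK_sub_mul hp hf a)
  have hdiff : (∫ y, bbmK (b - y) * f y) - ∫ y, bbmK (a - y) * f y = ∫ y, g y * f y := by
    simp_rw [g, sub_mul]
    exact (integral_sub (integrable_bbmK_sub_mul hp hf b) (integrable_bbmK_sub_mul hp hf a)).symm
  have hsign : 0 ≤ᵐ[volume] fun y => g y * f y := by
    filter_upwards [hneg, hpos] with y hin hout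
    by_cases hy : y ∈ Icc a b
    · exact mul_nonneg_of_nonpos_of_nonpos (sub_neg.mpr (bbmK_sub_lt_of_mem_Icc hab hy)).le
        (hin hy)
    · exact mul_nonneg (sub_pos.mpr (bbmK_sub_lt_of_notMem_Icc hab hy)).le (hout hy)
  have hg : ∀ y, g y ≠ 0 := fun y => by
    by_cases hy : y ∈ Icc a b
    · exact (sub_neg.mpr (bbmK_sub_lt_of_mem_Icc hab hy)).ne
    · exact (sub_pos.mpr (bbmK_sub_lt_of_notMem_Icc hab hy)).ne'
  refine ⟨sub_nonneg.mp (hdiff ▸ integral_nonneg_of_ae hsign), fun heq => ?_⟩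
  exact ae_eq_zero_of_integral_mul_eq_zero hsign hint (ae_of_all _ hg)
    (by rw [← hdiff, heq, sub_self])
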